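/- arXiv:1309.3060 — 6 statements merged into one kernel-verified Lean document; each statement's English description precedes it below -/
import Mathlib

section
/- A clause-set F has no forced assignments (i.e., no literal x such that assigning x to false makes F unsatisfiable) if and only if F is satisfiable and for every literal x occurring in F there is an autarky φ for F with φ(x)=1. -/
namespace Stmt0

/-- A total assignment satisfies a clause iff some literal of it is true. -/
def satC (a : ℕ → Bool) (C : Finset (ℕ × Bool)) : Prop := ∃ l ∈ C, a l.1 = l.2

/-- A total assignment satisfies a clause-set (CNF) iff it satisfies every clause. -/
def satF (a : ℕ → Bool) (F : Finset (Finset (ℕ × Bool))) : Prop := ∀ C ∈ F, satC a C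

/-- The variables occurring in a clause-set. -/
def vars (F : Finset (Finset (ℕ × Bool))) : Finset ℕ := F.biUnion fun C => C.image Prod.fst

/-- A literal `x` is forced for `F` iff setting `x` to false makes `F` unsatisfiable,
i.e. there is no satisfying assignment making `x` false. -/
def forced (F : Finset (Finset (ℕ × Bool))) (x : ℕ × Bool) : Prop :=
  ¬ ∃ a : ℕ → Bool, satF a F ∧ a x.1 = !x.2

/-- A partial assignment `φ` is an autarky for `F` iff every clause of `F` touched by `φ`
is satisfied by `φ`. -/
def autarky (φ : ℕ → Option Bool) (F : Finset (Finset (ℕ × Bool))) : Prop :=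
  ∀ C ∈ F, (∃ l ∈ C, φ l.1 ≠ none) → ∃ l ∈ C, φ l.1 = some l.2

lemma mem_vars_of_mem {F : Finset (Finset (ℕ × Bool))} {C : Finset (ℕ × Bool)}
    {l : ℕ × Bool} (hC : C ∈ F) (hl : l ∈ C) : l.1 ∈ vars F := by
  simp only [vars, Finset.mem_biUnion, Finset.mem_image]
  exact ⟨C, hC, l, hl, rfl⟩

/-- A clause-set has no forced assignments iff it is satisfiable and for every literal over
its variables there is an autarky making that literal true. -/
theorem no_forced_iff_autarkies (F : Finset (Finset (ℕ × Bool)))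
    (hclauses : ∀ C ∈ F, ∀ v : ℕ, ¬((v, true) ∈ C ∧ (v, false) ∈ C)) :
    (∀ x : ℕ × Bool, ¬ forced F x) ↔
      ((∃ a : ℕ → Bool, satF a F) ∧
        ∀ x : ℕ × Bool, x.1 ∈ vars F →
          ∃ φ : ℕ → Option Bool, {v | φ v ≠ none}.Finite ∧ autarky φ F ∧ φ x.1 = some x.2) := by
  constructor
  · intro h
    constructor
    · obtain ⟨a, ha, -⟩ := not_not.mp (h (0, true))
      exact ⟨a, ha⟩
    · intro x hx
      obtain ⟨a, ha, hax⟩ := not_not.mp (h (x.1, !x.2))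
      simp only [Bool.not_not] at hax
      refine ⟨fun v => if v ∈ vars F then some (a v) else none, ?_, ?_, ?_⟩
      · apply Set.Finite.subset (vars F).finite_toSet
        intro v hv
        simp only [Set.mem_setOf_eq] at hv
        by_contra hv'
        simp only [Finset.mem_coe] at hv'
        simp [hv'] at hv
      · intro C hC _
        obtain ⟨l, hl, hal⟩ := ha C hC
        exact ⟨l, hl, by simp [mem_vars_of_mem hC hl, hal]⟩
      · simp [hx, hax]
  · rintro ⟨⟨a0, ha0⟩, haut⟩ x hx
    unfold forced at hx
    by_cases hv : x.1 ∈ vars F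
    · obtain ⟨φ, -, hφaut, hφx⟩ := haut (x.1, !x.2) hv
      refine hx ⟨fun v => (φ v).getD (a0 v), ?_, ?_⟩
      · intro C hC
        by_cases htouch : ∃ l ∈ C, φ l.1 ≠ none
        · obtain ⟨l, hl, hsome⟩ := hφaut C hC htouch
          exact ⟨l, hl, by simp [hsome]⟩
        · push_neg at htouch
          obtain ⟨l, hl, hal⟩ := ha0 C hC
          exact ⟨l, hl, by simp [htouch l hl, hal]⟩
      · simp [hφx]
    · refine hx ⟨fun v => if v = x.1 then !x.2 else a0 v, ?_, by simp⟩
      intro C hC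
      obtain ⟨l, hl, hal⟩ := ha0 C hC
      have : l.1 ≠ x.1 := fun e => hv (e ▸ mem_vars_of_mem hC hl)
      exact ⟨l, hl, by simp [this, hal]⟩

end Stmt0
end

section
/- Consider a finite family (F_i)_{i∈I} of clause-sets whose bipartite incidence graph (between variables and indices i, with an edge between variable v and index i iff v occurs in F_i) is acyclic. If no F_i has a forced assignment, then the union ⋃_{i∈I} F_i has no forced assignment. -/
/-!
If `F` and `G` have no forced literals and share at most one variable `u`, they glue: to falsify
a literal, falsify it in the part containing its variable, then satisfy the other part with the
same value at `u` (possible since `u` is not forced there) and combine the two assignments.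
In an acyclic incidence graph, every nonempty subfamily has a member sharing at most one variable
with the others (a leaf of the forest spanned by the indices and the shared variables), so
induction on the subfamily glues all the `F i` together.
-/

namespace Stmt2

def satC (a : ℕ → Bool) (C : Finset (ℕ × Bool)) : Prop := ∃ l ∈ C, a l.1 = l.2

def satF (a : ℕ → Bool) (F : Finset (Finset (ℕ × Bool))) : Prop := ∀ C ∈ F, satC a C

def vars (F : Finset (Finset (ℕ × Bool))) : Finset ℕ := F.biUnion fun C => C.image Prod.fst

/-- `F` has no forced assignments: for every literal `x`, setting `x` to false
still leaves `F` satisfiable. -/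
def noForced (F : Finset (Finset (ℕ × Bool))) : Prop :=
  ∀ x : ℕ × Bool, ∃ a : ℕ → Bool, satF a F ∧ a x.1 = !x.2

/-- The bipartite incidence graph of a family of clause-sets: vertices are variables
(`Sum.inl`) and indices (`Sum.inr`), with an edge between `v` and `i` iff `v ∈ vars (F i)`. -/
def incG {I : Type} (F : I → Finset (Finset (ℕ × Bool))) : SimpleGraph (ℕ ⊕ I) where
  Adj a b :=
    (∃ v i, a = Sum.inl v ∧ b = Sum.inr i ∧ v ∈ vars (F i)) ∨
    (∃ v i, b = Sum.inl v ∧ a = Sum.inr i ∧ v ∈ vars (F i))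
  symm := by
    constructor
    rintro a b (⟨v, i, h1, h2, hv⟩ | ⟨v, i, h1, h2, hv⟩)
    · exact Or.inr ⟨v, i, h1, h2, hv⟩
    · exact Or.inl ⟨v, i, h1, h2, hv⟩
  loopless := by
    constructor
    intro a h
    rcases h with ⟨v, i, h1, h2, _⟩ | ⟨v, i, h1, h2, _⟩ <;> rw [h1] at h2 <;> simp at h2

lemma mem_vars {F : Finset (Finset (ℕ × Bool))} {u : ℕ} :
    u ∈ vars F ↔ ∃ C ∈ F, ∃ l ∈ C, l.1 = u := by
  simp [vars]

lemma mem_vars_biUnion {I : Type} {F : I → Finset (Finset (ℕ × Bool))} {S : Finset I} {u : ℕ} :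
    u ∈ vars (S.biUnion F) ↔ ∃ i ∈ S, u ∈ vars (F i) := by
  simp only [mem_vars, Finset.mem_biUnion]
  grind

section Gluing

variable {F G : Finset (Finset (ℕ × Bool))} {a a' : ℕ → Bool}

lemma satF_congr (h : ∀ u ∈ vars F, a u = a' u) (ha : satF a F) : satF a' F := by
  intro C hC
  obtain ⟨l, hl, hal⟩ := ha C hC
  exact ⟨l, hl, (h l.1 (mem_vars.2 ⟨C, hC, l, hl, rfl⟩)).symm.trans hal⟩

lemma satF_union : satF a (F ∪ G) ↔ satF a F ∧ satF a G := by
  simp only [satF, Finset.mem_union, or_imp, forall_and]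

lemma noForced.exists_satF_eqOn (hF : noForced F) {U : Set ℕ} (hU : U.Subsingleton)
    (a : ℕ → Bool) : ∃ a', satF a' F ∧ Set.EqOn a' a U := by
  rcases hU.eq_empty_or_singleton with rfl | ⟨u, rfl⟩
  · obtain ⟨a', ha', -⟩ := hF (0, true)
    exact ⟨a', ha', Set.eqOn_empty _ _⟩
  · obtain ⟨a', ha', hu⟩ := hF (u, !a u)
    exact ⟨a', ha', by simpa using hu⟩

theorem noForced_union (hF : noForced F) (hG : noForced G)
    (hFG : (↑(vars F) ∩ ↑(vars G) : Set ℕ).Subsingleton) : noForced (F ∪ G) := by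
  classical
  have glue : ∀ a a', satF a F → satF a' G → Set.EqOn a' a (↑(vars F) ∩ ↑(vars G)) →
      satF ((vars G).piecewise a' a) (F ∪ G) := by
    intro a a' ha ha' heq
    refine satF_union.2 ⟨satF_congr (fun u hu => ?_) ha, satF_congr (fun u hu => ?_) ha'⟩
    · by_cases huG : u ∈ vars G
      · rw [Finset.piecewise_eq_of_mem _ _ _ huG, heq ⟨hu, huG⟩]
      · rw [Finset.piecewise_eq_of_notMem _ _ _ huG]
    · rw [Finset.piecewise_eq_of_mem _ _ _ hu]
  intro x
  by_cases hx : x.1 ∈ vars G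
  · obtain ⟨a', ha', hxa'⟩ := hG x
    obtain ⟨a, ha, heq⟩ := hF.exists_satF_eqOn hFG a'
    refine ⟨_, glue a a' ha ha' (fun u hu => (heq hu).symm), ?_⟩
    rwa [Finset.piecewise_eq_of_mem _ _ _ hx]
  · obtain ⟨a, ha, hxa⟩ := hF x
    obtain ⟨a', ha', heq⟩ := hG.exists_satF_eqOn hFG a
    refine ⟨_, glue a a' ha ha' heq, ?_⟩
    rwa [Finset.piecewise_eq_of_notMem _ _ _ hx]

end Gluing

theorem _root_.SimpleGraph.IsAcyclic.exists_neighborSet_subsingleton {V : Type*}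
    {G : SimpleGraph V} [Nonempty V] [Finite G.edgeSet] (hG : G.IsAcyclic) :
    ∃ v, (G.neighborSet v).Subsingleton := by
  obtain ⟨u, v, p, hp, hmax⟩ := SimpleGraph.Walk.exists_isPath_forall_isPath_length_le_length G
  have hsnd : ∀ w, G.Adj u w → w = p.snd := fun w hw =>
    hG.eq_snd_of_adj_start hp hw <| by_contra fun hwp => by
      simpa using hmax _ _ (p.cons hw.symm) (hp.cons hwp)
  exact ⟨u, fun w hw w' hw' => (hsnd w hw).trans (hsnd w' hw').symm⟩

section Incidence

variable {I : Type} (F : I → Finset (Finset (ℕ × Bool)))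

lemma incG_adj_inl_inr {u : ℕ} {i : I} : (incG F).Adj (.inl u) (.inr i) ↔ u ∈ vars (F i) := by
  simp [incG]

lemma incG_adj_inr_inl {u : ℕ} {i : I} : (incG F).Adj (.inr i) (.inl u) ↔ u ∈ vars (F i) := by
  simp [incG]

lemma exists_leaf_index [DecidableEq I] (hacyc : (incG F).IsAcyclic) {S : Finset I}
    (hS : S.Nonempty) :
    ∃ i ∈ S, (↑(vars (F i)) ∩ ↑(vars ((S.erase i).biUnion F)) : Set ℕ).Subsingleton := by
  -- In the subforest spanned by `S` and the variables shared by two members of `S`, every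
  -- variable has two neighbours, so a vertex with at most one neighbour is an index.
  set V : Set (ℕ ⊕ I) :=
    Sum.elim (fun u => ∃ i ∈ S, ∃ j ∈ S, i ≠ j ∧ u ∈ vars (F i) ∧ u ∈ vars (F j)) (· ∈ S)
  have : Finite V := by
    refine Set.Finite.to_subtype
      (((S.biUnion fun i => vars (F i)).disjSum S).finite_toSet.subset ?_)
    rintro (u | i) hx
    · obtain ⟨i, hi, -, -, -, hu, -⟩ := hx
      exact Finset.inl_mem_disjSum.2 (Finset.mem_biUnion.2 ⟨i, hi, hu⟩)
    · exact Finset.inr_mem_disjSum.2 hx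
  obtain ⟨i₀, hi₀⟩ := hS
  have : Nonempty V := ⟨⟨.inr i₀, hi₀⟩⟩
  obtain ⟨⟨x, hx⟩, hleaf⟩ := (hacyc.induce V).exists_neighborSet_subsingleton
  cases x with
  | inl u =>
    obtain ⟨i, hi, j, hj, hij, hui, huj⟩ := hx
    have hsame := hleaf (x := ⟨.inr i, hi⟩) ((incG_adj_inl_inr F).2 hui) (y := ⟨.inr j, hj⟩)
      ((incG_adj_inl_inr F).2 huj)
    exact absurd (Sum.inr_injective (congrArg Subtype.val hsame)) hij
  | inr i =>
    refine ⟨i, hx, ?_⟩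
    have hnbr : ∀ u ∈ (↑(vars (F i)) ∩ ↑(vars ((S.erase i).biUnion F)) : Set ℕ),
        ∃ hu : Sum.inl u ∈ V, ⟨.inl u, hu⟩ ∈ (incG F |>.induce V).neighborSet ⟨.inr i, hx⟩ := by
      rintro u ⟨hui, hu⟩
      obtain ⟨j, hj, huj⟩ := mem_vars_biUnion.1 hu
      obtain ⟨hji, hj⟩ := Finset.mem_erase.1 hj
      exact ⟨⟨i, hx, j, hj, hji.symm, hui, huj⟩, (incG_adj_inr_inl F).2 hui⟩
    intro u hu w hw
    obtain ⟨hu, hu'⟩ := hnbr u hu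
    obtain ⟨hw, hw'⟩ := hnbr w hw
    exact Sum.inl_injective (congrArg Subtype.val (hleaf hu' hw'))

theorem noForced_biUnion (hacyc : (incG F).IsAcyclic) (hnf : ∀ i, noForced (F i))
    (S : Finset I) : noForced (S.biUnion F) := by
  classical
  induction S using Finset.strongInduction with
  | H S ih =>
    rcases S.eq_empty_or_nonempty with rfl | hS
    · exact fun x => ⟨fun _ => !x.2, by simp [satF], rfl⟩
    obtain ⟨i, hi, hleaf⟩ := exists_leaf_index F hacyc hS
    rw [← Finset.insert_erase hi, Finset.biUnion_insert]
    exact noForced_union (hnf i) (ih _ (Finset.erase_ssubset hi)) hleaf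

end Incidence

theorem union_noForced_general {I : Type} [Fintype I]
    (F : I → Finset (Finset (ℕ × Bool)))
    (hacyc : (incG F).IsAcyclic)
    (hnf : ∀ i, noForced (F i)) :
    noForced (Finset.univ.biUnion F) :=
  noForced_biUnion F hacyc hnf Finset.univ

/-- If the incidence graph of a finite family of clause-sets is acyclic and no member has
a forced assignment, then the union has no forced assignment. -/
theorem union_noForced {I : Type} [Fintype I] [DecidableEq I]
    (F : I → Finset (Finset (ℕ × Bool)))
    (hacyc : (incG F).IsAcyclic)
    (hnf : ∀ i, noForced (F i)) :
    noForced (Finset.univ.biUnion F) :=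
  union_noForced_general F hacyc hnf

end Stmt2
end

section
/- If a finite family (F_i)_{i∈I} of clause-sets satisfies: any two distinct members share at most one variable, and the variable-interaction graph (vertices I, edge between i≠j iff var(F_i)∩var(F_j)≠∅) is acyclic, then the bipartite incidence graph of the family is acyclic. -/
/-!
Every cycle of the incidence graph alternates between variables and members; rotate it to start
at a member. Its members, read off in order, form a closed walk in the variable-interaction graph
(consecutive members are distinct because the cycle never reuses an edge) whose vertices after
the first are pairwise distinct. A cycle of length 4 makes two distinct members share two
distinct variables; a longer one projects to a closed walk of length at least 3, i.e. a cycle of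
the acyclic interaction graph.
-/

namespace Stmt3

def vars (F : Finset (Finset (ℕ × Bool))) : Finset ℕ := F.biUnion fun C => C.image Prod.fst

/-- The bipartite incidence graph of a family of clause-sets. -/
def incG {I : Type} (F : I → Finset (Finset (ℕ × Bool))) : SimpleGraph (ℕ ⊕ I) where
  Adj a b :=
    (∃ v i, a = Sum.inl v ∧ b = Sum.inr i ∧ v ∈ vars (F i)) ∨
    (∃ v i, b = Sum.inl v ∧ a = Sum.inr i ∧ v ∈ vars (F i))
  symm := by
    constructor
    rintro a b (⟨v, i, h1, h2, hv⟩ | ⟨v, i, h1, h2, hv⟩)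
    · exact Or.inr ⟨v, i, h1, h2, hv⟩
    · exact Or.inl ⟨v, i, h1, h2, hv⟩
  loopless := by
    constructor
    intro a h
    rcases h with ⟨v, i, h1, h2, _⟩ | ⟨v, i, h1, h2, _⟩ <;> rw [h1] at h2 <;> simp at h2

/-- The variable-interaction graph: vertices are the indices, with an edge between `i ≠ j`
iff `F i` and `F j` share a variable. -/
def varG {I : Type} (F : I → Finset (Finset (ℕ × Bool))) : SimpleGraph I where
  Adj i j := i ≠ j ∧ (vars (F i) ∩ vars (F j)).Nonempty
  symm := by
    constructor
    intro i j h
    exact ⟨h.1.symm, by rw [Finset.inter_comm]; exact h.2⟩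
  loopless := ⟨fun i h => h.1 rfl⟩

open SimpleGraph Sum

theorem _root_.SimpleGraph.Walk.isCycle_of_support_tail_nodup {V : Type*} {G : SimpleGraph V}
    {u : V} {p : G.Walk u u} (hp : p.support.tail.Nodup) (hlen : 3 ≤ p.length) : p.IsCycle := by
  have hnil : ¬p.Nil := Walk.not_nil_iff_lt_length.2 (by omega)
  exact Walk.isCycle_iff_isPath_tail_and_le_length.2
    ⟨by rwa [Walk.isPath_def, Walk.support_tail_of_not_nil p hnil], hlen⟩

section
variable {I : Type} {F : I → Finset (Finset (ℕ × Bool))}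

@[simp] theorem incG_adj_inl_inr {v : ℕ} {i : I} :
    (incG F).Adj (inl v) (inr i) ↔ v ∈ vars (F i) := by
  simp [incG]

@[simp] theorem incG_adj_inr_inl {v : ℕ} {i : I} :
    (incG F).Adj (inr i) (inl v) ↔ v ∈ vars (F i) := by
  simp [incG]

@[simp] theorem not_incG_adj_inl_inl {v w : ℕ} : ¬(incG F).Adj (inl v) (inl w) := by
  simp [incG]

@[simp] theorem not_incG_adj_inr_inr {i j : I} : ¬(incG F).Adj (inr i) (inr j) := by
  simp [incG]

theorem exists_varG_walk_of_isTrail :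
    ∀ {i j : I} (w : (incG F).Walk (inr i) (inr j)), w.IsTrail →
    ∃ p : (varG F).Walk i j, w.length = 2 * p.length ∧ p.support = w.support.filterMap getRight?
  | _, _, .nil, _ => ⟨.nil, rfl, rfl⟩
  | _, _, .cons (v := inr _) h _, _ => absurd h not_incG_adj_inr_inr
  | _, _, .cons (v := inl _) _ (.cons (v := inl _) h _), _ => absurd h not_incG_adj_inl_inl
  | i, _, .cons (v := inl x) h (.cons (v := inr k) h' w), hw => by
    obtain ⟨p, hlen, hsupp⟩ := exists_varG_walk_of_isTrail w hw.of_cons.of_cons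
    have hik : i ≠ k := by
      rintro rfl
      simp [Walk.isTrail_def, Sym2.eq_swap] at hw
    have hadj : (varG F).Adj i k :=
      ⟨hik, x, Finset.mem_inter.2 ⟨incG_adj_inr_inl.1 h, incG_adj_inl_inr.1 h'⟩⟩
    refine ⟨.cons hadj p, ?_, by simp [hsupp, List.filterMap_cons]⟩
    simp only [Walk.length_cons, hlen]
    omega

theorem exists_inr_mem_support {x : ℕ ⊕ I} (c : (incG F).Walk x x) (hc : ¬c.Nil) :
    ∃ i, inr i ∈ c.support := by
  rcases x with v | i
  · rcases hs : c.snd with w | i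
    · exact absurd (hs ▸ c.adj_snd hc) not_incG_adj_inl_inl
    · exact ⟨i, hs ▸ c.getVert_mem_support 1⟩
  · exact ⟨i, c.start_mem_support⟩

theorem exists_ne_one_lt_card_inter_of_isCycle {i : I} {c : (incG F).Walk (inr i) (inr i)}
    (hc : c.IsCycle) (h4 : c.length = 4) :
    ∃ j k, j ≠ k ∧ 1 < (vars (F j) ∩ vars (F k)).card := by
  have hadj (n : ℕ) (hn : n < 4) : (incG F).Adj (c.getVert n) (c.getVert (n + 1)) :=
    c.adj_getVert_succ (h4 ▸ hn)
  have h0 : c.getVert 0 = inr i := c.getVert_zero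
  have h4' : c.getVert 4 = inr i := h4 ▸ c.getVert_length
  have hinj := hc.getVert_injOn
  rw [h4] at hinj
  rcases h1 : c.getVert 1 with v | _
  swap; · simpa [h0, h1] using hadj 0
  rcases h2 : c.getVert 2 with _ | j
  · simpa [h1, h2] using hadj 1
  rcases h3 : c.getVert 3 with w | _
  swap; · simpa [h2, h3] using hadj 2
  have hvw : v ≠ w := fun h => by
    have : 1 = 3 := hinj (by simp) (by simp) (by rw [h1, h3, h])
    omega
  have hij : i ≠ j := fun h => by
    have : 4 = 2 := hinj (by simp) (by simp) (by rw [h4', h2, h])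
    omega
  have hvi : v ∈ vars (F i) := by simpa [h0, h1] using hadj 0 (by norm_num)
  have hvj : v ∈ vars (F j) := by simpa [h1, h2] using hadj 1 (by norm_num)
  have hwj : w ∈ vars (F j) := by simpa [h2, h3] using hadj 2 (by norm_num)
  have hwi : w ∈ vars (F i) := by simpa [h3, h4'] using hadj 3 (by norm_num)
  have hsub : {v, w} ⊆ vars (F i) ∩ vars (F j) := by
    simp [Finset.insert_subset_iff, hvi, hvj, hwi, hwj]
  refine ⟨i, j, hij, ?_⟩
  calc 1 < ({v, w} : Finset ℕ).card := by rw [Finset.card_pair hvw]; omega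
    _ ≤ _ := Finset.card_le_card hsub
end

theorem incidence_acyclic_general {I : Type}
    (F : I → Finset (Finset (ℕ × Bool)))
    (hshare : ∀ i j : I, i ≠ j → (vars (F i) ∩ vars (F j)).card ≤ 1)
    (hvar : (varG F).IsAcyclic) :
    (incG F).IsAcyclic := by
  classical
  intro x c hc
  obtain ⟨i, hi⟩ := exists_inr_mem_support c hc.not_nil
  have hc' : (c.rotate _ hi).IsCycle := hc.rotate hi
  obtain ⟨p, hlen, hsupp⟩ := exists_varG_walk_of_isTrail _ hc'.isTrail
  have hp : p.support.tail.Nodup := by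
    rw [hsupp, ← Walk.cons_tail_support, List.filterMap_cons_some getRight?_inr, List.tail_cons]
    refine hc'.support_nodup.filterMap fun a a' b hb hb' => ?_
    simp_all [getRight?_eq_some_iff]
  obtain h4 | h3 : (c.rotate _ hi).length = 4 ∨ 3 ≤ p.length := by
    have := hc'.three_le_length
    omega
  · obtain ⟨j, k, hjk, hcard⟩ := exists_ne_one_lt_card_inter_of_isCycle hc' h4
    exact absurd (hshare j k hjk) (by omega)
  · exact hvar p (p.isCycle_of_support_tail_nodup hp h3)

/-- If any two distinct members share at most one variable and the variable-interaction
graph is acyclic, then the bipartite incidence graph is acyclic. -/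
theorem incidence_acyclic {I : Type} [Fintype I]
    (F : I → Finset (Finset (ℕ × Bool)))
    (hshare : ∀ i j : I, i ≠ j → (vars (F i) ∩ vars (F j)).card ≤ 1)
    (hvar : (varG F).IsAcyclic) :
    (incG F).IsAcyclic :=
  incidence_acyclic_general F hshare hvar
end Stmt3
end

section
/- The natural splitting of an XOR-constraint is sound and complete: for literals x_1,…,x_n (n ≥ 3) over distinct variables and fresh variables y_2,…,y_{n-1}, a total assignment to x_1,…,x_n satisfies x_1 ⊕ … ⊕ x_n = 0 if and only if it can be extended to the y-variables so that x_1 ⊕ x_2 = y_2, y_{i-1} ⊕ x_i = y_i for 3 ≤ i ≤ n−1, and y_{n-1} ⊕ x_n = 0 all hold; moreover this extension is unique. -/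
namespace Stmt14

/-- Soundness and completeness of the natural splitting of an XOR-constraint: for literals
`x_1,…,x_n` (`n ≥ 3`) over pairwise distinct variables, a total assignment `a` satisfies
`x_1 ⊕ ⋯ ⊕ x_n = 0` iff there are (then unique) values for the fresh chain variables
`y_2,…,y_{n-1}` (here `g j` is the value of `y_{j+2}`) satisfying `x_1 ⊕ x_2 = y_2`,
`y_{i-1} ⊕ x_i = y_i` (for `3 ≤ i ≤ n-1`) and `y_{n-1} ⊕ x_n = 0`. -/
theorem natural_splitting_sound_complete (n : ℕ) (hn : 3 ≤ n)
    (x : ℕ → ℕ × Bool)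
    (hinj : ∀ i j : ℕ, 1 ≤ i → i ≤ n → 1 ≤ j → j ≤ n → (x i).1 = (x j).1 → i = j)
    (a : ℕ → Bool) (lit : ℕ → ZMod 2)
    (hlit : ∀ i, lit i = if a (x i).1 = (x i).2 then 1 else 0) :
    (∑ i ∈ Finset.Icc 1 n, lit i) = 0 ↔
      ∃! g : Fin (n - 2) → ZMod 2,
        (g ⟨0, by omega⟩ = lit 1 + lit 2) ∧
        (∀ j : Fin (n - 2), 1 ≤ j.1 →
          g j = g ⟨j.1 - 1, by have := j.2; omega⟩ + lit (j.1 + 2)) ∧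
        (g ⟨n - 3, by omega⟩ + lit n = 0) := by
  set S : ℕ → ZMod 2 := fun k => ∑ i ∈ Finset.Icc 1 k, lit i with hS
  have hstep : ∀ k : ℕ, S (k + 1) = S k + lit (k + 1) := by
    intro k
    simp only [hS]
    rw [Finset.sum_Icc_succ_top (by omega : 1 ≤ k + 1)]
  -- any g satisfying the first two conditions is the partial-sum function
  have key : ∀ g : Fin (n - 2) → ZMod 2,
      (g ⟨0, by omega⟩ = lit 1 + lit 2) →
      (∀ j : Fin (n - 2), 1 ≤ j.1 →
        g j = g ⟨j.1 - 1, by have := j.2; omega⟩ + lit (j.1 + 2)) →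
      ∀ j : Fin (n - 2), g j = S (j.1 + 2) := by
    intro g h1 h2 j
    obtain ⟨m, hm⟩ := j
    induction m with
    | zero =>
        have : S 2 = lit 1 + lit 2 := by
          have h1' : S 1 = lit 1 := by simp [hS]
          have := hstep 1; rw [h1'] at this; simpa using this
        simpa [this] using h1
    | succ k ih =>
        have hk : k < n - 2 := by omega
        have h2' := h2 ⟨k + 1, hm⟩ (Nat.succ_le_succ (Nat.zero_le k))
        simp only [Nat.add_sub_cancel] at h2'
        rw [h2', ih hk, hstep (k + 2)]
  have hSn : S n = S (n - 1) + lit n := by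
    have := hstep (n - 1)
    have hn1 : n - 1 + 1 = n := by omega
    rwa [hn1] at this
  have hlast : ∀ g : Fin (n - 2) → ZMod 2,
      (∀ j : Fin (n - 2), g j = S (j.1 + 2)) →
      g ⟨n - 3, by omega⟩ = S (n - 1) := by
    intro g hg
    have := hg ⟨n - 3, by omega⟩
    simp only at this
    rw [this]
    congr 1
    omega
  constructor
  · intro h0
    refine ⟨fun j => S (j.1 + 2), ⟨?_, ?_, ?_⟩, ?_⟩
    · have h1' : S 1 = lit 1 := by simp [hS]
      have := hstep 1; rw [h1'] at this; simpa using this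
    · intro j hj
      simp only
      have : j.1 - 1 + 2 + 1 = j.1 + 2 := by omega
      rw [← this, hstep]
    · simp only
      have h : n - 3 + 2 = n - 1 := by omega
      rw [h, ← hSn]
      exact h0
    · intro g ⟨h1, h2, _⟩
      funext j
      exact key g h1 h2 j
  · rintro ⟨g, ⟨h1, h2, h3⟩, -⟩
    have hg := key g h1 h2
    have := hlast g hg
    rw [this] at h3
    exact hSn.trans h3
end Stmt14
end

section
/- Let C, D be two XOR-clauses with intersection I = C ∩ D, |I| ≥ 2, |C| > |I|, |D| > |I|, and var(C) ∩ var(D) = var(I). Let s be a fresh variable, I' = I ∪ {s} (constraint: ⊕I ⊕ s = 0), C' = (C \ I) ∪ {s}, D' = (D \ I) ∪ {s}. Then the XOR-clause-set {I', C', D'} represents {C, D}: the projections of its solutions to var(C) ∪ var(D) are exactly the common solutions of C and D. -/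
/-!
Write `x`, `y`, `z` for the parities of `C ∩ D`, `C \ D`, `D \ C` and `t` for the value of the
fresh variable `s`. Since `s` occurs in none of these parts, the three new clauses say
`x + t = y + t = z + t = 0`, i.e. `x = y = z = t` over `ℤ/2`, while `C` and `D` say
`x + y = 0` and `x + z = 0`, i.e. `x = y = z`. Hence the choice `t := x` extends every common
solution of `C` and `D`, and every solution of the new clauses restricts to one.
-/

namespace Stmt15

/-- The value in `ℤ/2` of the left-hand side `⊕_{x ∈ C} x` of the XOR-clause `C`
under the total assignment `a`. -/
def parity (a : ℕ → Bool) (C : Finset (ℕ × Bool)) : ZMod 2 :=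
  ∑ l ∈ C, (if a l.1 = l.2 then 1 else 0)

open Function

lemma parity_congr {a b : ℕ → Bool} {E : Finset (ℕ × Bool)}
    (h : ∀ l ∈ E, a l.1 = b l.1) : parity a E = parity b E :=
  Finset.sum_congr rfl fun l hl => by rw [h l hl]

lemma parity_eq_inter_add_sdiff (a : ℕ → Bool) (C D : Finset (ℕ × Bool)) :
    parity a C = parity a (C ∩ D) + parity a (C \ D) :=
  (Finset.sum_inter_add_sum_sdiff C D _).symm

lemma parity_update_union_singleton (a : ℕ → Bool) {E : Finset (ℕ × Bool)} {s : ℕ}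
    (hs : s ∉ E.image Prod.fst) (c d : Bool) :
    parity (update a s c) (E ∪ {(s, d)}) = parity a E + if c = d then 1 else 0 := by
  have hsE : ∀ l ∈ E, l.1 ≠ s := fun l hl h => hs (h ▸ Finset.mem_image_of_mem _ hl)
  have hdisj : Disjoint E {(s, d)} :=
    Finset.disjoint_singleton_right.2 fun h => hsE _ h rfl
  rw [parity, Finset.sum_union hdisj, Finset.sum_singleton, update_self]
  exact congrArg (· + _) (parity_congr fun l hl => update_of_ne (hsE l hl) _ _)

lemma exists_eq_off_iff_exists_update {α β : Type*} [DecidableEq α] (a : α → β) (s : α)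
    (P : (α → β) → Prop) :
    (∃ b : α → β, (∀ v, v ≠ s → b v = a v) ∧ P b) ↔ ∃ c, P (update a s c) := by
  constructor
  · rintro ⟨b, hba, hb⟩
    exact ⟨b s, by rwa [← eq_update_iff.2 ⟨rfl, hba⟩]⟩
  · rintro ⟨c, hc⟩
    exact ⟨update a s c, fun v hv => update_of_ne hv c a, hc⟩

lemma zmod_two_add_eq_zero_and_add_eq_zero_iff (x y z : ZMod 2) :
    (x + y = 0 ∧ x + z = 0) ↔ ∃ c : Bool,
      (x + if c = true then 1 else 0) = 0 ∧ (y + if c = true then 1 else 0) = 0 ∧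
        (z + if c = true then 1 else 0) = 0 := by
  revert x y z
  decide

theorem x2_represents_general (C D : Finset (ℕ × Bool))
    (s : ℕ) (hs : s ∉ C.image Prod.fst ∪ D.image Prod.fst) :
    ∀ a : ℕ → Bool,
      (parity a C = 0 ∧ parity a D = 0) ↔
        ∃ b : ℕ → Bool, (∀ v : ℕ, v ≠ s → b v = a v) ∧
          parity b ((C ∩ D) ∪ {(s, true)}) = 0 ∧
          parity b ((C \ D) ∪ {(s, true)}) = 0 ∧
          parity b ((D \ C) ∪ {(s, true)}) = 0 := by
  intro a
  have hsC : s ∉ C.image Prod.fst := fun h => hs (Finset.mem_union_left _ h)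
  have hsD : s ∉ D.image Prod.fst := fun h => hs (Finset.mem_union_right _ h)
  have hI : s ∉ (C ∩ D).image Prod.fst :=
    fun h => hsC (Finset.image_subset_image Finset.inter_subset_left h)
  have hCD : s ∉ (C \ D).image Prod.fst :=
    fun h => hsC (Finset.image_subset_image Finset.sdiff_subset h)
  have hDC : s ∉ (D \ C).image Prod.fst :=
    fun h => hsD (Finset.image_subset_image Finset.sdiff_subset h)
  rw [exists_eq_off_iff_exists_update]
  simp only [parity_update_union_singleton a hI, parity_update_union_singleton a hCD,
    parity_update_union_singleton a hDC]
  rw [parity_eq_inter_add_sdiff a C D, parity_eq_inter_add_sdiff a D C, Finset.inter_comm D C]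
  exact zmod_two_add_eq_zero_and_add_eq_zero_iff _ _ _

/-- The `X₂` splitting of two XOR-clauses sharing the part `I = C ∩ D` via a fresh
variable `s` represents `{C, D}`: the restrictions to the original variables of the
solutions of `{I ∪ {s}, (C \ I) ∪ {s}, (D \ I) ∪ {s}}` are exactly the common solutions
of `C` and `D`. -/
theorem x2_represents (C D : Finset (ℕ × Bool))
    (hCcf : ∀ v : ℕ, ¬((v, true) ∈ C ∧ (v, false) ∈ C))
    (hDcf : ∀ v : ℕ, ¬((v, true) ∈ D ∧ (v, false) ∈ D))
    (hI2 : 2 ≤ (C ∩ D).card)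
    (hCI : (C ∩ D).card < C.card) (hDI : (C ∩ D).card < D.card)
    (hvars : (C.image Prod.fst) ∩ (D.image Prod.fst) = (C ∩ D).image Prod.fst)
    (s : ℕ) (hs : s ∉ C.image Prod.fst ∪ D.image Prod.fst) :
    ∀ a : ℕ → Bool,
      (parity a C = 0 ∧ parity a D = 0) ↔
        ∃ b : ℕ → Bool, (∀ v : ℕ, v ≠ s → b v = a v) ∧
          parity b ((C ∩ D) ∪ {(s, true)}) = 0 ∧
          parity b ((C \ D) ∪ {(s, true)}) = 0 ∧
          parity b ((D \ C) ∪ {(s, true)}) = 0 :=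
  x2_represents_general C D s hs

end Stmt15
end

section
/- Every prime implicate of a clause-set F is the set of pure literals of some subclause-set: for every prime implicate C of F there is a nonempty subset G ⊆ F such that C is exactly the set of literals x that occur in G while their complements do not occur in G, and consequently F has at most 2^{c(F)} − 1 prime implicates. -/
namespace Stmt18

/-- The pure literals of a clause-set `G`: literals occurring in `G` whose complement does
not occur in `G`. -/
def pureLits (G : Finset (Finset (ℕ × Bool))) : Finset (ℕ × Bool) :=
  (G.biUnion id).filter fun l => ∀ C ∈ G, (l.1, !l.2) ∉ C

/-- `C` is an implicate of the CNF `F`. -/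
def implicate (F : Finset (Finset (ℕ × Bool))) (C : Finset (ℕ × Bool)) : Prop :=
  ∀ a : ℕ → Bool, (∀ D ∈ F, ∃ l ∈ D, a l.1 = l.2) → ∃ l ∈ C, a l.1 = l.2

/-- `C` is a prime implicate of `F`: a clause (complement-free) which is an implicate and
no proper subclause of which is an implicate. -/
def primeImp (F : Finset (Finset (ℕ × Bool))) (C : Finset (ℕ × Bool)) : Prop :=
  (∀ v : ℕ, ¬((v, true) ∈ C ∧ (v, false) ∈ C)) ∧ implicate F C ∧ ∀ C' ⊂ C, ¬ implicate F C'

/-- Every prime implicate of `F` is exactly the set of pure literals of some nonempty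
subset `G ⊆ F`; consequently `F` has at most `2^{c(F)} − 1` prime implicates. -/
theorem prime_implicates_pure (F : Finset (Finset (ℕ × Bool)))
    (hclauses : ∀ C ∈ F, ∀ v : ℕ, ¬((v, true) ∈ C ∧ (v, false) ∈ C)) :
    (∀ C : Finset (ℕ × Bool), primeImp F C → ∃ G ⊆ F, G.Nonempty ∧ C = pureLits G) ∧
      {C : Finset (ℕ × Bool) | primeImp F C}.ncard ≤ 2 ^ F.card - 1 := by
  classical
  have key : ∀ C : Finset (ℕ × Bool), primeImp F C → ∃ G ⊆ F, G.Nonempty ∧ C = pureLits G := by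
    intro C hC
    obtain ⟨hcf, himp, hmin⟩ := hC
    -- an assignment falsifying every literal of `C`
    obtain ⟨a0, ha0⟩ : ∃ a : ℕ → Bool, ∀ l ∈ C, a l.1 ≠ l.2 := by
      refine ⟨fun v => !(decide ((v, true) ∈ C)), ?_⟩
      intro l hl
      have hl' : (l.1, l.2) ∈ C := by simpa using hl
      cases hb : l.2 with
      | false =>
          have ht : (l.1, true) ∉ C := fun ht => hcf l.1 ⟨ht, by rw [← hb]; exact hl'⟩
          simp [ht, hb]
      | true =>
          have ht : (l.1, true) ∈ C := by rw [← hb]; exact hl'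
          simp [ht, hb]
    -- a minimal subset `G ⊆ F` of which `C` is an implicate
    set S : Finset (Finset (Finset (ℕ × Bool))) :=
      F.powerset.filter (fun G => implicate G C) with hSdef
    have hFS : F ∈ S := by
      simp only [hSdef, Finset.mem_filter, Finset.mem_powerset]
      exact ⟨le_refl _, himp⟩
    obtain ⟨G, hGS, hGmin⟩ := S.exists_min_image Finset.card ⟨F, hFS⟩
    rw [hSdef, Finset.mem_filter, Finset.mem_powerset] at hGS
    obtain ⟨hGF, hGimp⟩ := hGS
    have notimp : ∀ D ∈ G, ¬ implicate (G.erase D) C := by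
      intro D hD hbad
      have hmem : G.erase D ∈ S := by
        simp only [hSdef, Finset.mem_filter, Finset.mem_powerset]
        exact ⟨(G.erase_subset D).trans hGF, hbad⟩
      have h1 := hGmin _ hmem
      have h2 := Finset.card_erase_lt_of_mem hD
      omega
    -- (i): complements of literals of C do not occur in G
    have claim_i : ∀ l ∈ C, ∀ D ∈ G, (l.1, !l.2) ∉ D := by
      intro l hl D hD hmem
      apply notimp D hD
      intro a ha
      by_contra hno
      push_neg at hno
      have hD' : ∃ m ∈ D, a m.1 = m.2 := by
        refine ⟨(l.1, !l.2), hmem, ?_⟩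
        have h := hno l hl
        rcases Bool.eq_false_or_eq_true (a l.1) with h1 | h1 <;>
          rcases Bool.eq_false_or_eq_true l.2 with h2 | h2 <;>
            simp [h1, h2] at h ⊢
      have hall : ∀ E ∈ G, ∃ m ∈ E, a m.1 = m.2 := by
        intro E hE
        by_cases hED : E = D
        · subst hED; exact hD'
        · exact ha E (Finset.mem_erase.2 ⟨hED, hE⟩)
      obtain ⟨m, hm, ham⟩ := hGimp a hall
      exact hno m hm ham
    -- (ii): every literal of C occurs in G
    have claim_ii : ∀ l ∈ C, ∃ D ∈ G, l ∈ D := by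
      intro l hl
      by_contra hno
      push_neg at hno
      apply hmin (C.erase l) (Finset.erase_ssubset hl)
      intro a ha
      set a' := Function.update a l.1 (!l.2) with ha'def
      have ha'G : ∀ D ∈ G, ∃ m ∈ D, a' m.1 = m.2 := by
        intro D hD
        obtain ⟨m, hm, ham⟩ := ha D (hGF hD)
        refine ⟨m, hm, ?_⟩
        have hne : m.1 ≠ l.1 := by
          intro heq
          have hm' : (l.1, m.2) ∈ D := by rw [← heq]; simpa using hm
          cases hml : m.2 with
          | false =>
            cases hll : l.2 with
            | false =>
              apply hno D hD
              have : (l.1, l.2) = l := by simp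
              rw [← this, hll, ← hml]; exact hm'
            | true =>
              apply claim_i l hl D hD
              rw [hll]; simpa [hml] using hm'
          | true =>
            cases hll : l.2 with
            | true =>
              apply hno D hD
              have : (l.1, l.2) = l := by simp
              rw [← this, hll, ← hml]; exact hm'
            | false =>
              apply claim_i l hl D hD
              rw [hll]; simpa [hml] using hm'
        rw [ha'def, Function.update_of_ne hne]
        exact ham
      obtain ⟨m, hm, ham⟩ := hGimp a' ha'G
      have hml : m ≠ l := by
        intro heq
        subst heq
        rw [ha'def, Function.update_self] at ham
        simp at ham
      refine ⟨m, Finset.mem_erase.2 ⟨hml, hm⟩, ?_⟩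
      have hne : m.1 ≠ l.1 := by
        intro heq
        have hm' : (l.1, m.2) ∈ C := by rw [← heq]; simpa using hm
        have hl' : (l.1, l.2) ∈ C := by simpa using hl
        cases hml2 : m.2 with
        | false =>
          cases hll : l.2 with
          | false =>
            apply hml
            have h1 : m = (l.1, false) := by rw [← heq, ← hml2]
            have h2 : l = (l.1, false) := by
              have : (l.1, l.2) = l := by simp
              rw [← this, hll]
            rw [h1, h2]
          | true =>
            exact hcf l.1 ⟨by rw [← hll]; exact hl', by rw [← hml2]; exact hm'⟩
        | true =>
          cases hll : l.2 with
          | true =>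
            apply hml
            have h1 : m = (l.1, true) := by rw [← heq, ← hml2]
            have h2 : l = (l.1, true) := by
              have : (l.1, l.2) = l := by simp
              rw [← this, hll]
            rw [h1, h2]
          | false =>
            exact hcf l.1 ⟨by rw [← hml2]; exact hm', by rw [← hll]; exact hl'⟩
      rw [ha'def, Function.update_of_ne hne] at ham
      exact ham
    -- (iii): every pure literal of G belongs to C
    have claim_iii : pureLits G ⊆ C := by
      intro m hm
      rw [pureLits, Finset.mem_filter, Finset.mem_biUnion] at hm
      obtain ⟨⟨D0, hD0, hmD0⟩, hpure⟩ := hm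
      simp only [id] at hmD0
      by_contra hmC
      have hvar : ∀ l ∈ C, l.1 ≠ m.1 := by
        intro l hl heq
        have hl' : (m.1, l.2) ∈ C := by rw [← heq]; simpa using hl
        cases hll : l.2 with
        | false =>
          cases hmm : m.2 with
          | false =>
            apply hmC
            have : m = (m.1, false) := by rw [← hmm]
            rw [this, ← hll, ← heq]; simpa using hl
          | true =>
            obtain ⟨D, hD, hlD⟩ := claim_ii l hl
            apply hpure D hD
            have : (m.1, !m.2) = (l.1, l.2) := by simp [heq, hll, hmm]
            rw [this]; simpa using hlD
        | true =>
          cases hmm : m.2 with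
          | true =>
            apply hmC
            have : m = (m.1, true) := by rw [← hmm]
            rw [this, ← hll, ← heq]; simpa using hl
          | false =>
            obtain ⟨D, hD, hlD⟩ := claim_ii l hl
            apply hpure D hD
            have : (m.1, !m.2) = (l.1, l.2) := by simp [heq, hll, hmm]
            rw [this]; simpa using hlD
      apply notimp D0 hD0
      intro a ha
      by_contra hno
      push_neg at hno
      set a' := Function.update a m.1 m.2 with ha'def
      have ha'G : ∀ E ∈ G, ∃ k ∈ E, a' k.1 = k.2 := by
        intro E hE
        by_cases hED : E = D0
        · subst hED
          exact ⟨m, hmD0, by rw [ha'def, Function.update_self]⟩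
        · obtain ⟨k, hk, hak⟩ := ha E (Finset.mem_erase.2 ⟨hED, hE⟩)
          by_cases hkm : k.1 = m.1
          · -- k = m or k = complement of m; complement is not in E by purity
            have hk' : (m.1, k.2) ∈ E := by rw [← hkm]; simpa using hk
            by_cases hk2 : k.2 = m.2
            · refine ⟨k, hk, ?_⟩
              rw [ha'def, hkm, Function.update_self, hk2]
            · exfalso
              apply hpure E hE
              have : (m.1, !m.2) = (m.1, k.2) := by
                cases hmm : m.2 <;> cases hkk : k.2 <;> simp_all
              rw [this]; exact hk'
          · exact ⟨k, hk, by rw [ha'def, Function.update_of_ne hkm]; exact hak⟩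
      obtain ⟨l, hl, hal⟩ := hGimp a' ha'G
      rw [ha'def, Function.update_of_ne (hvar l hl)] at hal
      exact hno l hl hal
    -- G is nonempty
    have hGne : G.Nonempty := by
      rcases G.eq_empty_or_nonempty with h | h
      · exfalso
        subst h
        obtain ⟨l, hl, hal⟩ := hGimp a0 (by intro D hD; simp at hD)
        exact ha0 l hl hal
      · exact h
    refine ⟨G, hGF, hGne, ?_⟩
    apply Finset.Subset.antisymm
    · intro l hl
      rw [pureLits, Finset.mem_filter, Finset.mem_biUnion]
      obtain ⟨D, hD, hlD⟩ := claim_ii l hl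
      exact ⟨⟨D, hD, by simpa using hlD⟩, claim_i l hl⟩
    · exact claim_iii
  refine ⟨key, ?_⟩
  -- counting: prime implicates inject into nonempty subsets of F
  have hsub : {C : Finset (ℕ × Bool) | primeImp F C} ⊆
      pureLits '' (↑(F.powerset.erase ∅) : Set (Finset (Finset (ℕ × Bool)))) := by
    intro C hCp
    obtain ⟨G, hGF, hGne, hCG⟩ := key C hCp
    refine ⟨G, ?_, hCG.symm⟩
    simp only [Finset.coe_erase, Set.mem_diff, Finset.mem_coe, Finset.mem_powerset,
      Set.mem_singleton_iff]
    exact ⟨hGF, hGne.ne_empty⟩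
  have h1 : {C : Finset (ℕ × Bool) | primeImp F C}.ncard ≤
      (pureLits '' (↑(F.powerset.erase ∅) : Set (Finset (Finset (ℕ × Bool))))).ncard :=
    Set.ncard_le_ncard hsub (((F.powerset.erase ∅).finite_toSet).image _)
  have h2 : (pureLits '' (↑(F.powerset.erase ∅) : Set (Finset (Finset (ℕ × Bool))))).ncard ≤
      (↑(F.powerset.erase ∅) : Set (Finset (Finset (ℕ × Bool)))).ncard :=
    Set.ncard_image_le ((F.powerset.erase ∅).finite_toSet)
  have h3 : (↑(F.powerset.erase ∅) : Set (Finset (Finset (ℕ × Bool)))).ncard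
      = (F.powerset.erase ∅).card := Set.ncard_coe_finset _
  have h4 : (F.powerset.erase ∅).card = 2 ^ F.card - 1 := by
    rw [Finset.card_erase_of_mem (Finset.empty_mem_powerset F), Finset.card_powerset]
  omega

end Stmt18
end
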